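/- arXiv:2201.04784 — 4 statements merged into one kernel-verified Lean document; each statement's English description precedes it below -/
import Mathlib

section
/- Let d be uniformly distributed on the annulus with inner radius (k−1)r_t/K and outer radius k r_t/K, let g be an independent complex Gaussian with |g|² exponentially distributed with mean 1, and let ℓ(x) = 𝓛(d₀/x)^ε be the path-loss function. Then the CDF of φ = |g|² ℓ(d) is F(φ) = 1 − (2/ε) · (φ/ℓ(r_t))^{−2/ε} / ((k/K)² − ((k−1)/K)²) · [γ(2/ε, (φ/ℓ(r_t))(k/K)^ε) − γ(2/ε, (φ/ℓ(r_t))((k−1)/K)^ε)] for φ > 0, where γ(·,·) is the lower incomplete gamma function. -/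
/-!
Conditionally on `d = ‖X‖`, the event `|g|² ℓ(d) < φ` is `|g|² < φ / ℓ(d) = c d^ε` with
`c = φ / (𝓛 d₀^ε)`, which has probability `1 - exp (-c d^ε)`. Averaging over the uniform law on
the annulus in polar coordinates leaves `∫ r exp (-c r^ε) dr` over `[a, b]`, and the substitution
`t = c r^ε` turns this into `(γ(2/ε, c b^ε) - γ(2/ε, c a^ε)) / (ε c^(2/ε))`.
-/

open MeasureTheory Real

/-- Lower incomplete gamma function γ(a,x) = ∫₀ˣ t^(a−1) e^(−t) dt. -/
noncomputable def lowerGamma (a x : ℝ) : ℝ := ∫ t in Set.Ioc (0 : ℝ) x, t ^ (a - 1) * Real.exp (-t)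

open Set Metric ProbabilityTheory

section LowerGamma

variable {s : ℝ}

lemma intervalIntegrable_rpow_sub_one_mul_exp_neg (hs : 0 < s) (a b : ℝ) :
    IntervalIntegrable (fun t : ℝ => t ^ (s - 1) * exp (-t)) volume a b :=
  (intervalIntegral.intervalIntegrable_rpow' (by linarith)).mul_continuousOn (by fun_prop)

lemma lowerGamma_eq_intervalIntegral {x : ℝ} (hx : 0 ≤ x) :
    lowerGamma s x = ∫ t in (0 : ℝ)..x, t ^ (s - 1) * exp (-t) := by
  rw [intervalIntegral.integral_of_le hx, lowerGamma]

lemma continuousOn_lowerGamma (hs : 0 < s) : ContinuousOn (lowerGamma s) (Ici 0) :=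
  (intervalIntegral.continuous_primitive (intervalIntegrable_rpow_sub_one_mul_exp_neg hs) 0)
    |>.continuousOn.congr fun _ hx => lowerGamma_eq_intervalIntegral hx

lemma hasDerivAt_lowerGamma (hs : 0 < s) {x : ℝ} (hx : 0 < x) :
    HasDerivAt (lowerGamma s) (x ^ (s - 1) * exp (-x)) x := by
  have hcont : ∀ y ∈ Ioi (0 : ℝ), ContinuousAt (fun t : ℝ => t ^ (s - 1) * exp (-t)) y :=
    fun y hy => (continuousAt_rpow_const y _ (Or.inl (ne_of_gt hy))).mul (by fun_prop)
  refine (intervalIntegral.integral_hasDerivAt_right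
    (intervalIntegrable_rpow_sub_one_mul_exp_neg hs 0 x)
    (ContinuousAt.stronglyMeasurableAtFilter isOpen_Ioi hcont x hx)
    (hcont x hx)).congr_of_eventuallyEq ?_
  filter_upwards [eventually_gt_nhds hx] with y hy
  exact lowerGamma_eq_intervalIntegral hy.le

end LowerGamma

lemma hasDerivAt_lowerGamma_mul_rpow {p ε c r : ℝ} (hp : 0 < p) (hε : 0 < ε) (hc : 0 < c)
    (hr : 0 < r) :
    HasDerivAt (fun r => lowerGamma (p / ε) (c * r ^ ε) / (ε * c ^ (p / ε)))
      (r ^ (p - 1) * exp (-(c * r ^ ε))) r := by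
  have hcr : 0 < c * r ^ ε := by positivity
  refine (((hasDerivAt_lowerGamma (div_pos hp hε) hcr).comp r
    ((hasDerivAt_rpow_const (Or.inl hr.ne')).const_mul c)).div_const
      (ε * c ^ (p / ε))).congr_deriv ?_
  rw [mul_rpow hc.le (by positivity), ← rpow_mul hr.le]
  have hc' : c ^ (p / ε - 1) * c = c ^ (p / ε) := by
    rw [← rpow_add_one hc.ne']; ring_nf
  have hr' : r ^ (ε * (p / ε - 1)) * r ^ (ε - 1) = r ^ (p - 1) := by
    rw [← rpow_add hr]; congr 1; field_simp; ring
  calc _ = (c ^ (p / ε - 1) * c) * (r ^ (ε * (p / ε - 1)) * r ^ (ε - 1)) * exp (-(c * r ^ ε))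
          * ε / (ε * c ^ (p / ε)) := by ring
    _ = _ := by rw [hc', hr']; field_simp

lemma continuous_exp_neg_mul_rpow {c ε : ℝ} (hε : 0 ≤ ε) :
    Continuous fun r : ℝ => exp (-(c * r ^ ε)) :=
  ((continuous_rpow_const hε).const_mul c).neg.rexp

theorem integral_rpow_sub_one_mul_exp_neg_mul_rpow {p ε c a b : ℝ} (hp : 0 < p) (hε : 0 < ε)
    (hc : 0 < c) (ha : 0 ≤ a) (hab : a ≤ b) :
    ∫ r in a..b, r ^ (p - 1) * exp (-(c * r ^ ε))
      = (lowerGamma (p / ε) (c * b ^ ε) - lowerGamma (p / ε) (c * a ^ ε)) / (ε * c ^ (p / ε)) := by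
  have hmaps : MapsTo (fun r : ℝ => c * r ^ ε) (Icc a b) (Ici 0) :=
    fun r hr => mul_nonneg hc.le (rpow_nonneg (ha.trans hr.1) ε)
  rw [intervalIntegral.integral_eq_sub_of_hasDerivAt_of_le hab
    (((continuousOn_lowerGamma (div_pos hp hε)).comp
      ((continuous_rpow_const hε.le).const_mul c).continuousOn hmaps).div_const _)
    (fun r hr => hasDerivAt_lowerGamma_mul_rpow hp hε hc (ha.trans_lt hr.1))
    ((intervalIntegral.intervalIntegrable_rpow' (by linarith)).mul_continuousOn
      (continuous_exp_neg_mul_rpow hε.le).continuousOn), sub_div]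
  rfl

section Annulus

variable {E : Type*} [NormedAddCommGroup E] [NormedSpace ℝ E] [Nontrivial E]
  [FiniteDimensional ℝ E] [MeasurableSpace E] [BorelSpace E]
  (μ : Measure E) [μ.IsAddHaarMeasure] {a b : ℝ}

theorem setIntegral_fun_norm_annulus {F : Type*} [NormedAddCommGroup F] [NormedSpace ℝ F]
    (f : ℝ → F) (ha : 0 ≤ a) (hab : a ≤ b) :
    ∫ x in norm ⁻¹' Icc a b, f ‖x‖ ∂μ
      = Module.finrank ℝ E • μ.real (ball 0 1) •
          ∫ r in a..b, r ^ (Module.finrank ℝ E - 1) • f r := by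
  have hIoc : (Ioi 0 ∩ Icc a b : Set ℝ) =ᵐ[volume] Ioc a b := by
    have : (Ioi 0 ∩ Ioc a b : Set ℝ) = Ioc a b :=
      inter_eq_self_of_subset_right fun r hr => ha.trans_lt hr.1
    simpa only [this] using
      (ae_eq_refl (Ioi (0 : ℝ))).inter (Ioc_ae_eq_Icc (μ := volume) (a := a) (b := b)).symm
  rw [← integral_indicator (measurableSet_Icc.preimage continuous_norm.measurable)]
  simp_rw [← Function.comp_apply (f := f) (g := norm), indicator_comp_right]
  rw [integral_fun_norm_addHaar μ, intervalIntegral.integral_of_le hab,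
    ← setIntegral_congr_set hIoc, ← setIntegral_indicator measurableSet_Icc]
  simp_rw [indicator_smul_apply]

theorem measureReal_annulus (ha : 0 ≤ a) (hab : a ≤ b) :
    μ.real (norm ⁻¹' Icc a b)
      = (b ^ Module.finrank ℝ E - a ^ Module.finrank ℝ E) * μ.real (ball 0 1) := by
  have h := setIntegral_fun_norm_annulus μ (fun _ => (1 : ℝ)) ha hab
  obtain ⟨m, hm⟩ : ∃ m, Module.finrank ℝ E = m + 1 :=
    Nat.exists_eq_add_one.2 Module.finrank_pos
  simp only [setIntegral_const, smul_eq_mul, nsmul_eq_mul, mul_one, hm, Nat.add_sub_cancel,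
    integral_pow] at h
  rw [h, hm]
  push_cast
  field_simp

theorem setAverage_annulus_exp_neg_mul_norm_rpow {c ε : ℝ} (hc : 0 < c) (hε : 0 < ε) (ha : 0 ≤ a)
    (hab : a ≤ b) :
    ⨍ x in norm ⁻¹' Icc a b, exp (-(c * ‖x‖ ^ ε)) ∂μ
      = Module.finrank ℝ E / (b ^ Module.finrank ℝ E - a ^ Module.finrank ℝ E)
        * ((lowerGamma (Module.finrank ℝ E / ε) (c * b ^ ε)
            - lowerGamma (Module.finrank ℝ E / ε) (c * a ^ ε))
          / (ε * c ^ ((Module.finrank ℝ E : ℝ) / ε))) := by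
  have hn1 : 1 ≤ Module.finrank ℝ E := Module.finrank_pos
  have hV : μ.real (ball 0 1) ≠ 0 :=
    (ENNReal.toReal_pos (measure_ball_pos μ 0 one_pos).ne' measure_ball_lt_top.ne).ne'
  have hpow : ∀ r : ℝ, r ^ (Module.finrank ℝ E - 1) • exp (-(c * r ^ ε))
      = r ^ ((Module.finrank ℝ E : ℝ) - 1) * exp (-(c * r ^ ε)) :=
    fun r => by rw [smul_eq_mul, ← rpow_natCast, Nat.cast_sub hn1, Nat.cast_one]
  rw [setAverage_eq, measureReal_annulus μ ha hab,
    setIntegral_fun_norm_annulus μ (fun r => exp (-(c * r ^ ε))) ha hab]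
  simp_rw [hpow]
  rw [integral_rpow_sub_one_mul_exp_neg_mul_rpow (by exact_mod_cast hn1) hε hc ha hab,
    smul_eq_mul, nsmul_eq_mul, smul_eq_mul, mul_inv]
  field_simp

end Annulus

lemma expMeasure_Iio {r t : ℝ} (hr : 0 < r) (ht : 0 ≤ t) :
    expMeasure r (Iio t) = ENNReal.ofReal (1 - exp (-(r * t))) := by
  have := isProbabilityMeasure_expMeasure hr
  have : NullSingletonClass (expMeasure r) := nullSingletonClass_withDensity _
  rw [measure_congr Iio_ae_eq_Iic, ← ofReal_cdf, cdf_expMeasure_eq hr, if_pos ht]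

section Independence

variable {Ω E : Type*} [MeasurableSpace Ω] [MeasurableSpace E] {P : Measure Ω} {X : Ω → E}
  {Y : Ω → ℝ} {h : E → ℝ}

theorem measure_mul_lt_of_indepFun [IsFiniteMeasure P] (hX : Measurable X) (hY : Measurable Y)
    (hXY : IndepFun X Y P) (hh : Measurable h) (hpos : ∀ᵐ x ∂P.map X, 0 < h x) (φ : ℝ) :
    P {ω | Y ω * h (X ω) < φ} = ∫⁻ x, P.map Y (Iio (φ / h x)) ∂P.map X := by
  have hS : MeasurableSet {p : E × ℝ | p.2 * h p.1 < φ} :=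
    measurableSet_lt (measurable_snd.mul (hh.comp measurable_fst)) measurable_const
  rw [show {ω | Y ω * h (X ω) < φ} = (fun ω => (X ω, Y ω)) ⁻¹' {p | p.2 * h p.1 < φ} from rfl,
    ← Measure.map_apply (hX.prodMk hY) hS,
    (indepFun_iff_map_prod_eq_prod_map_map hX.aemeasurable hY.aemeasurable).1 hXY,
    Measure.prod_apply hS]
  exact lintegral_congr_ae (hpos.mono fun x hx =>
    congrArg _ (Set.ext fun y => (lt_div_iff₀ hx).symm))

theorem measureReal_mul_lt_of_indepFun_expMeasure [IsProbabilityMeasure P] (hX : Measurable X)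
    (hY : Measurable Y) (hXY : IndepFun X Y P) {r : ℝ} (hr : 0 < r) (hYlaw : P.map Y = expMeasure r)
    (hh : Measurable h) (hpos : ∀ᵐ x ∂P.map X, 0 < h x) {φ : ℝ} (hφ : 0 ≤ φ) :
    P.real {ω | Y ω * h (X ω) < φ} = 1 - ∫ x, exp (-(r * (φ / h x))) ∂P.map X := by
  have := Measure.isProbabilityMeasure_map (μ := P) hX.aemeasurable
  have hmeas : Measurable fun x => exp (-(r * (φ / h x))) := by fun_prop
  have hle : ∀ᵐ x ∂P.map X, exp (-(r * (φ / h x))) ≤ 1 :=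
    hpos.mono fun x hx => exp_le_one_iff.2 (neg_nonpos.2 (mul_nonneg hr.le (div_nonneg hφ hx.le)))
  have hint : Integrable (fun x => exp (-(r * (φ / h x)))) (P.map X) :=
    (integrable_const 1).mono' hmeas.aestronglyMeasurable
      (hle.mono fun x hx => by rwa [norm_of_nonneg (exp_pos _).le])
  rw [measureReal_def, measure_mul_lt_of_indepFun hX hY hXY hh hpos, hYlaw,
    lintegral_congr_ae (hpos.mono fun x hx => expMeasure_Iio hr (div_nonneg hφ hx.le)),
    ← integral_eq_lintegral_of_nonneg_ae (hle.mono fun x hx => sub_nonneg.2 hx)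
      (measurable_const.sub hmeas).aestronglyMeasurable,
    integral_sub (integrable_const 1) hint, integral_const, probReal_univ, one_smul]

end Independence

lemma div_mul_div_rpow {φ L d r ε : ℝ} (hd : 0 ≤ d) (hr : 0 ≤ r) :
    φ / (L * (d / r) ^ ε) = φ / (L * d ^ ε) * r ^ ε := by
  rw [div_rpow hd hr, mul_div_assoc', div_div_eq_mul_div, mul_div_right_comm]

lemma annulus_lowerGamma_formula_rescale {n : ℕ} {c R ε α β : ℝ} (hc : 0 < c) (hR : 0 < R)
    (hε : ε ≠ 0) (hα : 0 ≤ α) (hβ : 0 ≤ β) (hD : β ^ n - α ^ n ≠ 0) :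
    (n : ℝ) / ((R * β) ^ n - (R * α) ^ n)
        * ((lowerGamma (n / ε) (c * (R * β) ^ ε) - lowerGamma (n / ε) (c * (R * α) ^ ε))
          / (ε * c ^ ((n : ℝ) / ε)))
      = n / ε * (c * R ^ ε) ^ (-(n / ε)) / (β ^ n - α ^ n)
        * (lowerGamma (n / ε) (c * R ^ ε * β ^ ε) - lowerGamma (n / ε) (c * R ^ ε * α ^ ε)) := by
  rw [mul_pow, mul_pow, ← mul_sub, mul_rpow hR.le hβ, mul_rpow hR.le hα, ← mul_assoc c,
    ← mul_assoc c, rpow_neg (by positivity), mul_rpow hc.le (by positivity), ← rpow_mul hR.le,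
    mul_div_cancel₀ _ hε, rpow_natCast]
  generalize lowerGamma (n / ε) (c * R ^ ε * β ^ ε) - lowerGamma (n / ε) (c * R ^ ε * α ^ ε) = Δ
  field_simp

/-- CDF of φ = |g|² ℓ(d) for d uniform on the annulus and |g|² ~ Exp(1),
with path loss ℓ(x) = 𝓛(d₀/x)^ε. -/
theorem annulus_noma_gain_cdf
    {Ω : Type*} [MeasurableSpace Ω] (P : Measure Ω) [IsProbabilityMeasure P]
    (K k : ℕ) (hk : 1 ≤ k) (hK : k ≤ K) (rt L d0 ε : ℝ)
    (hrt : 0 < rt) (hL : 0 < L) (hd0 : 0 < d0) (hε : 0 < ε)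
    (X : Ω → EuclideanSpace ℝ (Fin 2)) (hXmeas : Measurable X)
    (g2 : Ω → ℝ) (hg2meas : Measurable g2)
    (hXlaw : Measure.map X P
      = (volume {x : EuclideanSpace ℝ (Fin 2) |
            ((k : ℝ) - 1) * rt / K ≤ ‖x‖ ∧ ‖x‖ ≤ (k : ℝ) * rt / K})⁻¹
          • volume.restrict {x : EuclideanSpace ℝ (Fin 2) |
            ((k : ℝ) - 1) * rt / K ≤ ‖x‖ ∧ ‖x‖ ≤ (k : ℝ) * rt / K})
    (hg2law : Measure.map g2 P = ProbabilityTheory.expMeasure 1)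
    (hindep : ProbabilityTheory.IndepFun X g2 P) :
    ∀ φ₀ : ℝ, 0 < φ₀ →
      (P {ω | g2 ω * (L * (d0 / ‖X ω‖) ^ ε) < φ₀}).toReal
        = 1 - (2 / ε) * (φ₀ / (L * (d0 / rt) ^ ε)) ^ (-(2 / ε))
            / (((k : ℝ) / K) ^ 2 - (((k : ℝ) - 1) / K) ^ 2)
          * (lowerGamma (2 / ε) ((φ₀ / (L * (d0 / rt) ^ ε)) * ((k : ℝ) / K) ^ ε)
             - lowerGamma (2 / ε) ((φ₀ / (L * (d0 / rt) ^ ε)) * (((k : ℝ) - 1) / K) ^ ε)) := by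
  intro φ₀ hφ₀
  set α := ((k : ℝ) - 1) / K
  set β := (k : ℝ) / K
  have hα : 0 ≤ α := div_nonneg (by simpa using hk) (Nat.cast_nonneg K)
  have hαβ : α < β := div_lt_div_of_pos_right (by linarith) (by exact_mod_cast hk.trans hK)
  set c := φ₀ / (L * d0 ^ ε)
  have hc : 0 < c := by positivity
  rw [show ((k : ℝ) - 1) * rt / K = rt * α by ring, show (k : ℝ) * rt / K = rt * β by ring]
    at hXlaw
  have hne : ∀ᵐ x ∂P.map X, x ≠ 0 := by
    rw [hXlaw]; exact Measure.ae_smul_measure (ae_restrict_of_ae (Measure.ae_ne volume 0)) _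
  have hlaw : ∫ x, exp (-(1 * (φ₀ / (L * (d0 / ‖x‖) ^ ε)))) ∂P.map X
      = ⨍ x in (norm : EuclideanSpace ℝ (Fin 2) → ℝ) ⁻¹' Icc (rt * α) (rt * β),
          exp (-(c * ‖x‖ ^ ε)) := by
    simp_rw [hXlaw, ← setAverage_eq', one_mul, div_mul_div_rpow hd0.le (norm_nonneg _)]
    rfl
  rw [← measureReal_def, measureReal_mul_lt_of_indepFun_expMeasure hXmeas hg2meas hindep one_pos
    hg2law (by fun_prop) (hne.mono fun x hx => mul_pos hL (rpow_pos_of_pos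
      (div_pos hd0 (norm_pos_iff.2 hx)) ε)) hφ₀.le, hlaw,
    setAverage_annulus_exp_neg_mul_norm_rpow volume hc hε (by positivity) (by gcongr),
    finrank_euclideanSpace_fin, div_mul_div_rpow hd0.le hrt.le,
    annulus_lowerGamma_formula_rescale hc hrt hε.ne' hα (hα.trans hαβ.le)
      (sub_pos.2 (pow_lt_pow_left₀ hαβ hα two_ne_zero)).ne']
  rfl
end

section
/- For two independent exponential random variables X and Y with means a > 0 and b > 0 respectively, the CDF of the product XY satisfies P(XY < z) = 1 − ∫₀^∞ e^{−z/(a y)} (1/b) e^{−y/b} dy for z > 0, and this integral equals 2√(z/(ab)) K₁(2√(z/(ab))), where K₁ is the modified Bessel function of the second kind of order 1. -/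
/-!
Conditioning on `Y`, `P(XY ≥ z) = E[exp(-z/(aY))]` by the exponential survival function of `X`,
which gives the first identity. For the second, substitute `y = b c eᵗ` with `c = √(z/(ab))`: the
exponent `-z/(ay) - y/b` becomes `-2c cosh t`, so the integral is `∫ c e^{-2c cosh t} eᵗ dt` over
`ℝ`, and the symmetry `t ↦ -t` replaces `eᵗ` by `cosh t`, i.e. by `2 cosh t` on `(0, ∞)`.
-/

open MeasureTheory Real ProbabilityTheory

/-- Modified Bessel function of the second kind of order 1,
via K₁(x) = ∫₀^∞ e^(−x cosh t) cosh t dt. -/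
noncomputable def besselK1 (x : ℝ) : ℝ :=
  ∫ t in Set.Ioi (0 : ℝ), Real.exp (-x * Real.cosh t) * Real.cosh t

open Set

lemma ProbabilityTheory.IndepFun.measure_preimage_prodMk {Ω α β : Type*} [MeasurableSpace Ω] [MeasurableSpace α]
    [MeasurableSpace β] {P : Measure Ω} [IsFiniteMeasure P] {X : Ω → α} {Y : Ω → β}
    (hX : Measurable X) (hY : Measurable Y) (hXY : IndepFun X Y P) {s : Set (α × β)}
    (hs : MeasurableSet s) :
    P ((fun ω ↦ (X ω, Y ω)) ⁻¹' s) = ((P.map X).prod (P.map Y)) s := by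
  rw [← hXY.map_prod_eq_prod_map_map hX.aemeasurable hY.aemeasurable,
    Measure.map_apply (hX.prodMk hY) hs]

section ExpMeasure
variable {r : ℝ}

lemma expMeasure_eq_withDensity : expMeasure r = volume.withDensity (exponentialPDF r) := rfl

lemma ae_pos_expMeasure (hr : 0 < r) : ∀ᵐ x ∂expMeasure r, 0 < x := by
  have := isProbabilityMeasure_expMeasure hr
  rw [ae_iff]
  simp only [not_lt]
  change expMeasure r (Iic 0) = 0
  rw [← ofReal_cdf, cdf_expMeasure_eq hr]
  simp

lemma expMeasure_Ici (hr : 0 < r) {t : ℝ} (ht : 0 ≤ t) :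
    expMeasure r (Ici t) = ENNReal.ofReal (exp (-(r * t))) := by
  have := isProbabilityMeasure_expMeasure hr
  have hIio : expMeasure r (Iio t) = ENNReal.ofReal (1 - exp (-(r * t))) := by
    rw [expMeasure_eq_withDensity, withDensity_apply _ measurableSet_Iio,
      setLIntegral_congr Iio_ae_eq_Iic, lintegral_exponentialPDF_eq_antiDeriv hr, if_pos ht]
  rw [← compl_Iio, prob_compl_eq_one_sub measurableSet_Iio, hIio, ← ENNReal.ofReal_one,
    ← ENNReal.ofReal_sub _ (sub_nonneg.2 (exp_le_one_iff.2 (by nlinarith))), sub_sub_cancel]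

lemma lintegral_expMeasure (hr : 0 < r) {f : ℝ → ENNReal} (hf : Measurable f) :
    ∫⁻ x, f x ∂expMeasure r = ∫⁻ x in Ioi 0, ENNReal.ofReal (r * exp (-(r * x))) * f x := by
  rw [← Measure.restrict_eq_self_of_ae_mem (s := Ioi 0) (ae_pos_expMeasure hr),
    expMeasure_eq_withDensity, setLIntegral_withDensity_eq_setLIntegral_mul (f := exponentialPDF r)
      _ (measurable_exponentialPDFReal r).ennreal_ofReal hf measurableSet_Ioi]
  exact setLIntegral_congr_fun measurableSet_Ioi fun x hx ↦ by
    rw [Pi.mul_apply, exponentialPDF_of_nonneg (le_of_lt hx)]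

end ExpMeasure

section Substitution
variable {E : Type*} [NormedAddCommGroup E] [NormedSpace ℝ E] {k : ℝ}

lemma image_const_mul_exp (hk : 0 < k) : (fun t ↦ k * exp t) '' univ = Ioi 0 := by
  rw [← image_const_mul_Ioi_zero hk, ← range_exp, ← image_univ, image_image]

lemma integral_comp_const_mul_exp (hk : 0 < k) (g : ℝ → E) :
    ∫ t, (k * exp t) • g (k * exp t) = ∫ y in Ioi 0, g y := by
  rw [← image_const_mul_exp hk, integral_image_eq_integral_abs_deriv_smul MeasurableSet.univ
    (fun t _ ↦ ((hasDerivAt_exp t).const_mul k).hasDerivWithinAt)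
    (fun s _ t _ h ↦ exp_injective (mul_left_cancel₀ hk.ne' h)), setIntegral_univ]
  simp_rw [abs_of_pos (mul_pos hk (exp_pos _))]

lemma integrable_comp_const_mul_exp_iff (hk : 0 < k) (g : ℝ → E) :
    Integrable (fun t ↦ (k * exp t) • g (k * exp t)) ↔ IntegrableOn g (Ioi 0) := by
  rw [← image_const_mul_exp hk, integrableOn_image_iff_integrableOn_abs_deriv_smul
    MeasurableSet.univ (fun t _ ↦ ((hasDerivAt_exp t).const_mul k).hasDerivWithinAt)
    (fun s _ t _ h ↦ exp_injective (mul_left_cancel₀ hk.ne' h)), integrableOn_univ]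
  simp_rw [abs_of_pos (mul_pos hk (exp_pos _))]

end Substitution

lemma integral_mul_exp_of_even {F : ℝ → ℝ} (hF : F.Even) (hint : Integrable fun t ↦ F t * exp t) :
    ∫ t, F t * exp t = 2 * ∫ t in Ioi 0, F t * cosh t := by
  have hneg : ∫ t, F t * exp (-t) = ∫ t, F t * exp t := by
    simpa only [hF.eq] using integral_neg_eq_self (fun t ↦ F t * exp t) volume
  have hint' : Integrable fun t ↦ F t * exp (-t) := by
    simpa only [hF.eq] using hint.comp_neg
  calc ∫ t, F t * exp t = ((∫ t, F t * exp t) + ∫ t, F t * exp (-t)) / 2 := by rw [hneg]; ring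
    _ = ∫ t, F |t| * cosh |t| := by
        rw [← integral_add hint hint', ← integral_div]
        congr 1 with t
        rcases abs_choice t with h | h <;> rw [h]
        · rw [cosh_eq]; ring
        · rw [hF.eq, cosh_neg, cosh_eq]; ring
    _ = 2 * ∫ t in Ioi 0, F t * cosh t := integral_comp_abs (f := fun t ↦ F t * cosh t)

section ProductOfExponentials
variable {a b z : ℝ}

lemma integrableOn_exp_neg_div_mul_exp_neg_div (ha : 0 ≤ a) (hb : 0 < b) (hz : 0 ≤ z) :
    IntegrableOn (fun y ↦ exp (-(z / (a * y))) * ((1 / b) * exp (-(y / b)))) (Ioi 0) := by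
  have hdens : IntegrableOn (fun y ↦ (1 / b) * exp (-b⁻¹ * y)) (Ioi 0) :=
    (exp_neg_integrableOn_Ioi 0 (inv_pos.2 hb)).const_mul _
  refine hdens.mono' (by fun_prop) ((ae_restrict_mem measurableSet_Ioi).mono fun y hy ↦ ?_)
  have hexp : exp (-(z / (a * y))) ≤ 1 :=
    exp_le_one_iff.2 (neg_nonpos.2 (div_nonneg hz (mul_nonneg ha (le_of_lt hy))))
  rw [norm_of_nonneg (by positivity), neg_mul, inv_mul_eq_div]
  exact mul_le_of_le_one_left (by positivity) hexp

lemma expMeasure_prod_setOf_le_mul (ha : 0 < a) (hb : 0 < b) (hz : 0 ≤ z) :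
    ((expMeasure (1 / a)).prod (expMeasure (1 / b))) {p | z ≤ p.1 * p.2}
      = ENNReal.ofReal (∫ y in Ioi 0, exp (-(z / (a * y))) * ((1 / b) * exp (-(y / b)))) := by
  have := isProbabilityMeasure_expMeasure (one_div_pos.2 ha)
  have := isProbabilityMeasure_expMeasure (one_div_pos.2 hb)
  have hs : MeasurableSet {p : ℝ × ℝ | z ≤ p.1 * p.2} := measurableSet_le (by fun_prop) (by fun_prop)
  rw [Measure.prod_apply_symm hs, lintegral_expMeasure (by positivity)
    (measurable_measure_prodMk_right hs), ofReal_integral_eq_lintegral_ofReal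
    (integrableOn_exp_neg_div_mul_exp_neg_div ha.le hb hz)
    ((ae_restrict_mem measurableSet_Ioi).mono fun y _ ↦ by positivity)]
  refine setLIntegral_congr_fun measurableSet_Ioi fun y (hy : 0 < y) ↦ ?_
  have hslice : (fun x ↦ (x, y)) ⁻¹' {p : ℝ × ℝ | z ≤ p.1 * p.2} = Ici (z / y) := by
    ext x; simp [div_le_iff₀ hy]
  rw [hslice, expMeasure_Ici (by positivity) (by positivity), mul_comm,
    ← ENNReal.ofReal_mul (by positivity)]
  congr 1
  field_simp

lemma exp_neg_div_mul_exp_neg_div_comp_const_mul_exp (ha : a ≠ 0) (hb : b ≠ 0) {c : ℝ}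
    (hc : c ≠ 0) (hz : z = a * b * c ^ 2) (t : ℝ) :
    b * c * exp t * (exp (-(z / (a * (b * c * exp t)))) * ((1 / b) * exp (-(b * c * exp t / b))))
      = c * exp (-(2 * c) * cosh t) * exp t := by
  have hquot : z / (a * (b * c * exp t)) = c * exp (-t) := by
    rw [hz, exp_neg]; field_simp
  have hlin : b * c * exp t / b = c * exp t := by field_simp
  rw [hquot, hlin, cosh_eq, show -(2 * c) * ((exp t + exp (-t)) / 2)
    = -(c * exp (-t)) + -(c * exp t) by ring, exp_add]
  field_simp

theorem integral_exp_neg_div_mul_exp_neg_div_eq_besselK1 (ha : 0 < a) (hb : 0 < b)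
    (hz : 0 < z) :
    ∫ y in Ioi 0, exp (-(z / (a * y))) * ((1 / b) * exp (-(y / b)))
      = 2 * √(z / (a * b)) * besselK1 (2 * √(z / (a * b))) := by
  set c := √(z / (a * b))
  have hc : 0 < c := sqrt_pos.2 (by positivity)
  have hzc : z = a * b * c ^ 2 := by rw [sq_sqrt (by positivity)]; field_simp
  have hbc : 0 < b * c := mul_pos hb hc
  have hsub := exp_neg_div_mul_exp_neg_div_comp_const_mul_exp ha.ne' hb.ne' hc.ne' hzc
  have hint : Integrable fun t ↦ c * exp (-(2 * c) * cosh t) * exp t := by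
    simpa only [smul_eq_mul, hsub] using (integrable_comp_const_mul_exp_iff hbc _).2
      (integrableOn_exp_neg_div_mul_exp_neg_div ha.le hb hz.le)
  rw [← integral_comp_const_mul_exp hbc]
  simp_rw [smul_eq_mul, hsub]
  rw [integral_mul_exp_of_even (fun t ↦ by simp only [cosh_neg]) hint, besselK1]
  simp_rw [← integral_const_mul]
  congr 1 with t
  ring

end ProductOfExponentials

/-- CDF of the product of two independent exponentials with means a and b. -/
theorem product_two_exponentials_cdf
    {Ω : Type*} [MeasurableSpace Ω] (P : Measure Ω) [IsProbabilityMeasure P]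
    (X Y : Ω → ℝ) (hX : Measurable X) (hY : Measurable Y)
    (a b : ℝ) (ha : 0 < a) (hb : 0 < b)
    (hXlaw : Measure.map X P = ProbabilityTheory.expMeasure (1 / a))
    (hYlaw : Measure.map Y P = ProbabilityTheory.expMeasure (1 / b))
    (hindep : ProbabilityTheory.IndepFun X Y P)
    (z : ℝ) (hz : 0 < z) :
    (P {ω | X ω * Y ω < z}).toReal
      = 1 - ∫ y in Set.Ioi (0 : ℝ), Real.exp (-(z / (a * y))) * ((1 / b) * Real.exp (-(y / b)))
    ∧ (∫ y in Set.Ioi (0 : ℝ), Real.exp (-(z / (a * y))) * ((1 / b) * Real.exp (-(y / b))))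
        = 2 * Real.sqrt (z / (a * b)) * besselK1 (2 * Real.sqrt (z / (a * b))) := by
  refine ⟨?_, integral_exp_neg_div_mul_exp_neg_div_eq_besselK1 ha hb hz⟩
  have hs : MeasurableSet {p : ℝ × ℝ | z ≤ p.1 * p.2} := measurableSet_le (by fun_prop) (by fun_prop)
  have hcompl : {ω | X ω * Y ω < z} = ((fun ω ↦ (X ω, Y ω)) ⁻¹' {p | z ≤ p.1 * p.2})ᶜ := by
    ext ω; simp
  rw [hcompl, ← measureReal_def, probReal_compl_eq_one_sub (hs.preimage (hX.prodMk hY)),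
    measureReal_def, hindep.measure_preimage_prodMk hX hY hs, hXlaw, hYlaw,
    expMeasure_prod_setOf_le_mul ha hb hz.le,
    ENNReal.toReal_ofReal (setIntegral_nonneg measurableSet_Ioi fun y _ ↦ by positivity)]
end

section
/- Let d have density f(ρ) = (2πλ ρ e^{−πλρ²})/(1 − e^{−πλ r²}) on [0, r], let |g|² ~ Exp(1) independent of d, and let φ = |g|² 𝓛 (d₀/d)^ε with 𝓛, d₀, ε > 0. Then for φ₀ > 0, 1 − F_φ(φ₀) = (πλ r²/(1 − e^{−πλ r²})) · (2/ε) ∫₀¹ u^{(2−ε)/ε} exp( −u φ₀/ℓ(r) − πλ r² u^{2/ε} ) du, where ℓ(r) = 𝓛 d₀^ε r^{−ε}. -/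
/-!
Conditionally on `d = x`, independence and `|g|² ~ Exp(1)` give
`P(φ ≥ φ₀ | d = x) = exp (-φ₀ / (𝓛 (d₀ / x)^ε))`. The CDF hypothesis identifies the law of `d` as
the density `f` on `(0, r]`, so the tail probability is `∫₀ʳ f(x) exp (-φ₀ / (𝓛 (d₀ / x)^ε)) dx`,
and the substitution `x = r u^(1/ε)` turns this into the stated integral over `(0, 1)`.
-/

open MeasureTheory Real ProbabilityTheory Set

theorem expMeasure_one_Ici {t : ℝ} (ht : 0 ≤ t) :
    expMeasure 1 (Ici t) = ENNReal.ofReal (exp (-t)) := by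
  have hpdf : ∀ x ∈ Ici t, gammaPDF 1 1 x = ENNReal.ofReal (exp (-x)) := fun x hx => by
    rw [gammaPDF_of_nonneg (ht.trans hx)]
    norm_num
  rw [expMeasure, gammaMeasure, withDensity_apply _ measurableSet_Ici,
    setLIntegral_congr_fun measurableSet_Ici hpdf,
    ← ofReal_integral_eq_lintegral_ofReal, integral_Ici_eq_integral_Ioi, integral_exp_neg_Ioi]
  · exact Iff.mpr integrableOn_Ici_iff_integrableOn_Ioi
      (by simpa using exp_neg_integrableOn_Ioi t one_pos)
  · exact Filter.Eventually.of_forall fun x => (exp_pos _).le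

section

variable {Ω : Type*} [MeasurableSpace Ω] {P : Measure Ω}

theorem map_eq_withDensity_of_cdf [IsProbabilityMeasure P] {X : Ω → ℝ} (hX : Measurable X)
    {f : ℝ → ℝ} {r : ℝ} (hfint : IntegrableOn f (Ioc 0 r)) (hf : ∀ x ∈ Ioc 0 r, 0 ≤ f x)
    (hrange : ∀ ω, 0 < X ω ∧ X ω ≤ r)
    (hcdf : ∀ x, 0 ≤ x → x ≤ r → (P {ω | X ω ≤ x}).toReal = ∫ ρ in (0 : ℝ)..x, f ρ) :
    P.map X = (volume.restrict (Ioc 0 r)).withDensity fun x => ENNReal.ofReal (f x) := by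
  obtain ⟨ω₀⟩ := nonempty_of_isProbabilityMeasure P
  have hr : 0 ≤ r := (hrange ω₀).1.le.trans (hrange ω₀).2
  have := Measure.isProbabilityMeasure_map (μ := P) hX.aemeasurable
  refine Measure.ext_of_Iic _ _ fun a => ?_
  -- clamping `a` to `[0, r]` changes neither side
  set c := max 0 (min a r)
  have hc : 0 ≤ c ∧ c ≤ r := ⟨le_max_left _ _, max_le hr (min_le_right _ _)⟩
  have hpre : X ⁻¹' Iic a = {ω | X ω ≤ c} := by
    ext ω
    have := hrange ω
    simp only [mem_preimage, mem_Iic, mem_ofPred_eq, c, le_max_iff, le_min_iff]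
    constructor <;> intro h <;> [exact Or.inr ⟨h, this.2⟩; rcases h with h | h <;> linarith]
  have hinter : Iic a ∩ Ioc 0 r = Ioc 0 c := by
    ext x
    simp only [mem_inter_iff, mem_Iic, mem_Ioc, c, le_max_iff, le_min_iff]
    constructor
    · rintro ⟨hxa, hx0, hxr⟩; exact ⟨hx0, Or.inr ⟨hxa, hxr⟩⟩
    · rintro ⟨hx0, h | h⟩ <;> [linarith; exact ⟨h.1, hx0, h.2⟩]
  rw [Measure.map_apply hX measurableSet_Iic, withDensity_apply _ measurableSet_Iic,
    Measure.restrict_restrict measurableSet_Iic, hinter, hpre,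
    ← ofReal_integral_eq_lintegral_ofReal (hfint.mono_set (Ioc_subset_Ioc_right hc.2))
      ((ae_restrict_iff' measurableSet_Ioc).mpr
        (Filter.Eventually.of_forall fun x hx => hf x ⟨hx.1, hx.2.trans hc.2⟩)),
    ← intervalIntegral.integral_of_le hc.1, ← hcdf c hc.1 hc.2, ENNReal.ofReal_toReal
      (measure_ne_top _ _)]

theorem measure_le_eq_lintegral_exp_neg_of_indepFun [IsProbabilityMeasure P] {X Y : Ω → ℝ}
    (hX : Measurable X) (hY : Measurable Y) (hXY : IndepFun X Y P)
    (hYlaw : P.map Y = expMeasure 1) {t : ℝ → ℝ} (ht : Measurable t) (ht0 : ∀ ω, 0 ≤ t (X ω)) :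
    P {ω | t (X ω) ≤ Y ω} = ∫⁻ x, ENNReal.ofReal (exp (-t x)) ∂P.map X := by
  have hT : MeasurableSet {p : ℝ × ℝ | t p.1 ≤ p.2} :=
    measurableSet_le (ht.comp measurable_fst) measurable_snd
  have ht0' : ∀ᵐ x ∂P.map X, 0 ≤ t x :=
    (ae_map_iff hX.aemeasurable (measurableSet_le measurable_const ht)).mpr (ae_of_all _ ht0)
  rw [← preimage_ofPred_eq (p := fun p : ℝ × ℝ => t p.1 ≤ p.2) (f := fun ω => (X ω, Y ω)),
    ← Measure.map_apply (hX.prodMk hY) hT,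
    (indepFun_iff_map_prod_eq_prod_map_map hX.aemeasurable hY.aemeasurable).mp hXY,
    Measure.prod_apply hT, hYlaw]
  exact lintegral_congr_ae (ht0'.mono fun x hx => expMeasure_one_Ici hx)

end

theorem toReal_lintegral_withDensity_ofReal {α : Type*} [MeasurableSpace α] {μ : Measure α}
    {f h : α → ℝ} (hf : AEMeasurable f μ) (hf0 : 0 ≤ᵐ[μ] f) (hh : AEMeasurable h μ)
    (hh0 : 0 ≤ᵐ[μ] h) :
    (∫⁻ x, ENNReal.ofReal (h x) ∂μ.withDensity fun x => ENNReal.ofReal (f x)).toReal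
      = ∫ x, f x * h x ∂μ := by
  have hfh0 : 0 ≤ᵐ[μ] fun x => f x * h x := by
    filter_upwards [hf0, hh0] with x hfx hhx using mul_nonneg hfx hhx
  rw [lintegral_withDensity_eq_lintegral_mul₀ hf.ennreal_ofReal hh.ennreal_ofReal,
    integral_eq_lintegral_of_nonneg_ae hfh0 (hf.mul hh).aestronglyMeasurable]
  congr 1
  refine lintegral_congr_ae ?_
  filter_upwards [hf0] with x hx
  simp [ENNReal.ofReal_mul hx]

theorem integral_Ioc_eq_integral_Ioo_comp_mul_rpow {E : Type*} [NormedAddCommGroup E]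
    [NormedSpace ℝ E] (g : ℝ → E) {r p : ℝ} (hr : 0 < r) (hp : 0 < p) :
    ∫ x in Ioc 0 r, g x = ∫ u in Ioo 0 1, (r * (p * u ^ (p - 1))) • g (r * u ^ p) := by
  have himage : (fun u => r * u ^ p) '' Ioo 0 1 = Ioo 0 r := by
    ext x
    constructor
    · rintro ⟨u, hu, rfl⟩
      exact ⟨by have := hu.1; positivity,
        mul_lt_of_lt_one_right hr (rpow_lt_one hu.1.le hu.2 hp)⟩
    · rintro ⟨hx0, hxr⟩
      have hxr' : 0 < x / r := div_pos hx0 hr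
      refine ⟨(x / r) ^ p⁻¹, ⟨rpow_pos_of_pos hxr' _,
        rpow_lt_one hxr'.le ((div_lt_one hr).mpr hxr) (inv_pos.mpr hp)⟩, ?_⟩
      simp only [rpow_inv_rpow hxr'.le hp.ne', mul_div_cancel₀ _ hr.ne']
  have hinj : InjOn (fun u => r * u ^ p) (Ioo 0 1) := fun u hu v hv huv =>
    rpow_left_injOn hp.ne' hu.1.le hv.1.le (mul_left_cancel₀ hr.ne' huv)
  rw [integral_Ioc_eq_integral_Ioo, ← himage,
    integral_image_eq_integral_abs_deriv_smul measurableSet_Ioo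
      (fun u hu => ((hasDerivAt_rpow_const (Or.inl hu.1.ne')).const_mul r).hasDerivWithinAt)
      hinj]
  refine setIntegral_congr_fun measurableSet_Ioo fun u hu => ?_
  have := hu.1
  rw [abs_of_pos (by positivity)]

noncomputable def nearestDistPDF (lam r ρ : ℝ) : ℝ :=
  2 * π * lam * ρ * exp (-(π * lam * ρ ^ 2)) / (1 - exp (-(π * lam * r ^ 2)))

theorem continuous_nearestDistPDF (lam r : ℝ) : Continuous (nearestDistPDF lam r) := by
  unfold nearestDistPDF; fun_prop

theorem nearestDistPDF_nonneg {lam r ρ : ℝ} (hlam : 0 < lam) (hr : 0 < r) (hρ : 0 ≤ ρ) :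
    0 ≤ nearestDistPDF lam r ρ := by
  have : exp (-(π * lam * r ^ 2)) < 1 := exp_lt_one_iff.mpr (by simp; positivity)
  unfold nearestDistPDF
  exact div_nonneg (by positivity) (sub_nonneg.mpr this.le)

theorem setIntegral_nearestDistPDF_mul_exp {lam r ε : ℝ} (hr : 0 < r) (hε : 0 < ε) (k : ℝ) :
    ∫ x in Ioc 0 r, nearestDistPDF lam r x * exp (-(k * (x / r) ^ ε))
      = π * lam * r ^ 2 / (1 - exp (-(π * lam * r ^ 2))) * (2 / ε)
        * ∫ u in (0 : ℝ)..1,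
            u ^ ((2 - ε) / ε) * exp (-(u * k) - π * lam * r ^ 2 * u ^ (2 / ε)) := by
  rw [integral_Ioc_eq_integral_Ioo_comp_mul_rpow _ hr (inv_pos.mpr hε),
    intervalIntegral.integral_of_le zero_le_one, integral_Ioc_eq_integral_Ioo,
    ← integral_const_mul]
  refine setIntegral_congr_fun measurableSet_Ioo fun u hu => ?_
  have hu : 0 < u := hu.1
  have hsq : (r * u ^ ε⁻¹) ^ 2 = r ^ 2 * u ^ (2 / ε) := by
    rw [mul_pow, ← rpow_natCast (u ^ ε⁻¹), ← rpow_mul hu.le]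
    norm_num [div_eq_mul_inv, mul_comm]
  have hpow : u ^ (ε⁻¹ - 1) * u ^ ε⁻¹ = u ^ ((2 - ε) / ε) := by
    rw [← rpow_add hu]
    congr 1
    field_simp
    ring
  rw [mul_div_cancel_left₀ _ hr.ne', rpow_inv_rpow hu.le hε.ne', smul_eq_mul, nearestDistPDF,
    hsq, ← mul_assoc (π * lam), ← hpow, mul_comm k u]
  simp only [exp_sub, exp_neg]
  ring

/-- Integral representation of the CCDF of φ = |g|²𝓛(d₀/d)^ε with d the
truncated nearest-neighbor distance and |g|² ~ Exp(1), independent. -/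
theorem qom_ccdf_integral_representation
    {Ω : Type*} [MeasurableSpace Ω] (P : Measure Ω) [IsProbabilityMeasure P]
    (d g2 : Ω → ℝ) (hd : Measurable d) (hg2 : Measurable g2)
    (hindep : ProbabilityTheory.IndepFun d g2 P)
    (lam r L d0 ε : ℝ) (hlam : 0 < lam) (hr : 0 < r) (hL : 0 < L) (hd0 : 0 < d0) (hε : 0 < ε)
    (hdrange : ∀ ω, 0 < d ω ∧ d ω ≤ r)
    (hdcdf : ∀ x : ℝ, 0 ≤ x → x ≤ r →
      (P {ω | d ω ≤ x}).toReal
        = ∫ ρ in (0 : ℝ)..x,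
            (2 * π * lam * ρ * Real.exp (-(π * lam * ρ ^ 2)))
              / (1 - Real.exp (-(π * lam * r ^ 2))))
    (hg2law : Measure.map g2 P = ProbabilityTheory.expMeasure 1) :
    ∀ φ₀ : ℝ, 0 < φ₀ →
      1 - (P {ω | g2 ω * (L * (d0 / d ω) ^ ε) < φ₀}).toReal
        = (π * lam * r ^ 2 / (1 - Real.exp (-(π * lam * r ^ 2)))) * (2 / ε)
          * ∫ u in (0 : ℝ)..1, u ^ ((2 - ε) / ε)
              * Real.exp (-(u * φ₀ / (L * d0 ^ ε * r ^ (-ε)))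
                  - π * lam * r ^ 2 * u ^ (2 / ε)) := by
  intro φ₀ hφ₀
  -- the threshold `φ₀ / (𝓛 (d₀ / x)^ε)` for `|g|²`, written to be linear in `u = (x / r)^ε`
  set t : ℝ → ℝ := fun x => φ₀ / (L * d0 ^ ε * r ^ (-ε)) * (x / r) ^ ε
  have hlaw : P.map d = (volume.restrict (Ioc 0 r)).withDensity
      fun x => ENNReal.ofReal (nearestDistPDF lam r x) :=
    map_eq_withDensity_of_cdf hd (continuous_nearestDistPDF lam r).integrableOn_Ioc
      (fun x hx => nearestDistPDF_nonneg hlam hr hx.1.le) hdrange hdcdf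
  have hevent : {ω | g2 ω * (L * (d0 / d ω) ^ ε) < φ₀} = {ω | t (d ω) ≤ g2 ω}ᶜ := by
    ext ω
    have hdω := (hdrange ω).1
    have ht : t (d ω) = φ₀ / (L * (d0 / d ω) ^ ε) := by
      simp only [t, div_rpow hd0.le hdω.le, div_rpow hdω.le hr.le, rpow_neg hr.le]
      field_simp
    simp only [mem_ofPred_eq, mem_compl_iff, not_le, ht,
      lt_div_iff₀ (by positivity : 0 < L * (d0 / d ω) ^ ε)]
  have ht0 : ∀ ω, 0 ≤ t (d ω) := fun ω => by have := (hdrange ω).1; positivity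
  have htail :=
    measure_le_eq_lintegral_exp_neg_of_indepFun hd hg2 hindep hg2law (by fun_prop) ht0
  rw [hevent, ← measureReal_def, probReal_compl_eq_one_sub (measurableSet_le (by fun_prop) hg2),
    sub_sub_cancel, measureReal_def, htail, hlaw,
    toReal_lintegral_withDensity_ofReal (continuous_nearestDistPDF lam r).aemeasurable
      ((ae_restrict_iff' measurableSet_Ioc).mpr
        (ae_of_all _ fun x hx => nearestDistPDF_nonneg hlam hr hx.1.le))
      (by fun_prop) (ae_of_all _ fun x => (exp_pos _).le),
    setIntegral_nearestDistPDF_mul_exp hr hε]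
  simp only [mul_div_assoc]
end

section
/- For k ≥ 1 and K ≥ k, define χ⁰ = k²/(k² − (k−1)²) and χ¹ = (k−1)²/(k² − (k−1)²), and φ̄ = (2/ε)/((2/ε)+1) · [χ⁰(k/K)^ε − χ¹((k−1)/K)^ε] with ε > 0. Then the CDF in the context satisfies F(φ) = φ̄ · φ/ℓ(r) + o(φ) as φ → 0⁺. -/
open Asymptotics Filter

open MeasureTheory

lemma myexp_bound (t : ℝ) (ht : 0 ≤ t) : Real.exp (-t) ≤ 1 - t + t ^ 2 / 2 := by
  have h := Real.sum_le_exp_of_nonneg ht 4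
  have hE : 1 + t + t ^ 2 / 2 + t ^ 3 / 6 ≤ Real.exp t := by
    have e : ∑ i ∈ Finset.range 4, t ^ i / Nat.factorial i
        = 1 + t + t ^ 2 / 2 + t ^ 3 / 6 := by
      rw [Finset.sum_range_succ, Finset.sum_range_succ, Finset.sum_range_succ,
        Finset.sum_range_succ, Finset.sum_range_zero]
      norm_num [Nat.factorial]
      try ring
    linarith [e ▸ h]
  have hpos : (0:ℝ) < Real.exp t := Real.exp_pos t
  rw [Real.exp_neg, inv_le_iff_one_le_mul₀ hpos]
  nlinarith [sq_nonneg (t - 1), sq_nonneg t, pow_nonneg ht 3, pow_nonneg ht 4, pow_nonneg ht 5]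

lemma setIntegral_rpow {r : ℝ} (h : -1 < r) {x : ℝ} (hx : 0 ≤ x) :
    ∫ t in Set.Ioc (0:ℝ) x, t ^ r = x ^ (r + 1) / (r + 1) := by
  rw [← intervalIntegral.integral_of_le hx, integral_rpow (Or.inl h)]
  rw [Real.zero_rpow (by linarith)]
  ring

lemma lowerGamma_expand (a : ℝ) (ha : 0 < a) (x : ℝ) (hx : 0 ≤ x) :
    lowerGamma a x - (x ^ a / a - x ^ (a + 1) / (a + 1)) ∈
      Set.Icc 0 (x ^ (a + 2) / (2 * (a + 2))) := by
  have hIexp : IntegrableOn (fun t : ℝ => t ^ (a - 1) * Real.exp (-t)) (Set.Ioc 0 x) := by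
    have h0 : IntegrableOn (fun t : ℝ => Real.exp (-t) * t ^ (a - 1)) (Set.Ioc 0 x) :=
      (Real.GammaIntegral_convergent ha).mono_set Set.Ioc_subset_Ioi_self
    simpa [mul_comm] using h0
  have hIr : ∀ r : ℝ, -1 < r → IntegrableOn (fun t : ℝ => t ^ r) (Set.Ioc 0 x) := by
    intro r hr
    have := (intervalIntegral.intervalIntegrable_rpow' hr (a := 0) (b := x))
    rwa [intervalIntegrable_iff_integrableOn_Ioc_of_le hx] at this
  have hIcomb : IntegrableOn (fun t : ℝ => t ^ (a - 1) * (Real.exp (-t) - 1 + t))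
      (Set.Ioc 0 x) := by
    refine (IntegrableOn.congr_fun (((hIexp.sub (hIr (a - 1) (by linarith))).add
      (hIr a (by linarith))) ) ?_ measurableSet_Ioc)
    intro t ht
    have ht0 : t ≠ 0 := ne_of_gt ht.1
    have : t ^ a = t ^ (a - 1) * t := by
      rw [← Real.rpow_add_one ht0]; ring_nf
    simp only [Pi.add_apply, Pi.sub_apply, this]
    ring
  have J1 : ∫ t in Set.Ioc (0:ℝ) x, t ^ (a - 1) = x ^ a / a := by
    have := setIntegral_rpow (r := a - 1) (by linarith) hx
    simpa using this
  have J2 : ∫ t in Set.Ioc (0:ℝ) x, t ^ a = x ^ (a + 1) / (a + 1) := by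
    exact setIntegral_rpow (by linarith) hx
  have split : (∫ t in Set.Ioc (0:ℝ) x, t ^ (a - 1) * (Real.exp (-t) - 1 + t))
      = (∫ t in Set.Ioc (0:ℝ) x, t ^ (a - 1) * Real.exp (-t))
        - (∫ t in Set.Ioc (0:ℝ) x, t ^ (a - 1)) + ∫ t in Set.Ioc (0:ℝ) x, t ^ a := by
    have hsub : IntegrableOn (fun t : ℝ => t ^ (a - 1) * Real.exp (-t) - t ^ (a - 1))
        (Set.Ioc 0 x) := hIexp.sub (hIr (a - 1) (by linarith))
    rw [← integral_sub hIexp (hIr (a - 1) (by linarith)),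
      ← integral_add hsub (hIr a (by linarith))]
    refine setIntegral_congr_fun measurableSet_Ioc ?_
    intro t ht
    have ht0 : t ≠ 0 := ne_of_gt ht.1
    have : t ^ a = t ^ (a - 1) * t := by
      rw [← Real.rpow_add_one ht0]; ring_nf
    simp only [Pi.add_apply, Pi.sub_apply, this]
    ring
  have key : lowerGamma a x - (x ^ a / a - x ^ (a + 1) / (a + 1)) =
      ∫ t in Set.Ioc (0:ℝ) x, t ^ (a - 1) * (Real.exp (-t) - 1 + t) := by
    rw [split, J1, J2, lowerGamma]
    ring
  rw [key]
  constructor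
  · refine setIntegral_nonneg measurableSet_Ioc fun t ht => ?_
    refine mul_nonneg (Real.rpow_nonneg ht.1.le _) ?_
    nlinarith [Real.add_one_le_exp (-t)]
  · have hmono : ∫ t in Set.Ioc (0:ℝ) x, t ^ (a - 1) * (Real.exp (-t) - 1 + t) ≤
        ∫ t in Set.Ioc (0:ℝ) x, t ^ (a + 1) / 2 := by
      refine setIntegral_mono_on hIcomb ((hIr (a + 1) (by linarith)).div_const 2)
        measurableSet_Ioc fun t ht => ?_
      have ht0 : 0 < t := ht.1
      have h1 : Real.exp (-t) - 1 + t ≤ t ^ 2 / 2 := by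
        nlinarith [myexp_bound t ht0.le]
      have h2 : t ^ (a - 1) * (t ^ 2 / 2) = t ^ (a + 1) / 2 := by
        have h3 : t ^ (a - 1) * t ^ (2:ℕ) = t ^ (a + 1) := by
          rw [← Real.rpow_natCast t 2, ← Real.rpow_add ht0]
          congr 1
          push_cast
          ring
        calc t ^ (a - 1) * (t ^ 2 / 2) = (t ^ (a - 1) * t ^ (2:ℕ)) / 2 := by ring
          _ = t ^ (a + 1) / 2 := by rw [h3]
      calc t ^ (a - 1) * (Real.exp (-t) - 1 + t) ≤ t ^ (a - 1) * (t ^ 2 / 2) :=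
            mul_le_mul_of_nonneg_left h1 (Real.rpow_nonneg ht0.le _)
        _ = t ^ (a + 1) / 2 := h2
    have J3 : ∫ t in Set.Ioc (0:ℝ) x, t ^ (a + 1) / 2 = x ^ (a + 2) / (2 * (a + 2)) := by
      rw [integral_div, setIntegral_rpow (by linarith) hx,
        show a + 1 + 1 = a + 2 by ring, div_div, mul_comm]
    linarith [J3 ▸ hmono]

set_option maxHeartbeats 1600000 in
/-- First-order small-φ expansion of the annulus CDF:
F(φ) = φ̄ φ/ℓ(r) + o(φ) as φ → 0⁺, where
φ̄ = (2/ε)/((2/ε)+1)·[χ⁰(k/K)^ε − χ¹((k−1)/K)^ε]. -/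
theorem com_cdf_asymp (K k : ℕ) (hk : 1 ≤ k) (hK : k ≤ K)
    (ε ℓr : ℝ) (hε : 0 < ε) (hℓr : 0 < ℓr)
    (F : ℝ → ℝ)
    (hF : ∀ φ : ℝ, 0 < φ →
      F φ = 1 - (2 / ε) * (φ / ℓr) ^ (-(2 / ε))
          / (((k : ℝ) / K) ^ 2 - (((k : ℝ) - 1) / K) ^ 2)
        * (lowerGamma (2 / ε) ((φ / ℓr) * ((k : ℝ) / K) ^ ε)
           - lowerGamma (2 / ε) ((φ / ℓr) * (((k : ℝ) - 1) / K) ^ ε))) :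
    (fun φ : ℝ => F φ
        - ((2 / ε) / ((2 / ε) + 1)
            * (((k : ℝ) ^ 2 / ((k : ℝ) ^ 2 - ((k : ℝ) - 1) ^ 2)) * ((k : ℝ) / K) ^ ε
              - (((k : ℝ) - 1) ^ 2 / ((k : ℝ) ^ 2 - ((k : ℝ) - 1) ^ 2))
                * (((k : ℝ) - 1) / K) ^ ε)) * φ / ℓr)
      =o[nhdsWithin 0 (Set.Ioi 0)] fun φ : ℝ => φ := by
  have hk1 : (1:ℝ) ≤ (k:ℝ) := by exact_mod_cast hk
  have hK1 : (k:ℝ) ≤ (K:ℝ) := by exact_mod_cast hK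
  have hKpos : (0:ℝ) < (K:ℝ) := by linarith
  set a : ℝ := 2 / ε with ha_def
  have ha : 0 < a := by positivity
  set b0 : ℝ := (k:ℝ) / (K:ℝ) with hb0_def
  set b1 : ℝ := ((k:ℝ) - 1) / (K:ℝ) with hb1_def
  have hb0 : 0 < b0 := by rw [hb0_def]; positivity
  have hb1 : 0 ≤ b1 := by rw [hb1_def]; apply div_nonneg <;> linarith
  have hb01 : b1 < b0 := by
    rw [hb0_def, hb1_def, div_lt_div_iff₀ hKpos hKpos]
    exact mul_lt_mul_of_pos_right (by linarith) hKpos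
  set c0 : ℝ := b0 ^ ε with hc0_def
  set c1 : ℝ := b1 ^ ε with hc1_def
  have hc0 : 0 < c0 := Real.rpow_pos_of_pos hb0 ε
  have hc1 : 0 ≤ c1 := Real.rpow_nonneg hb1 ε
  set D : ℝ := b0 ^ 2 - b1 ^ 2 with hD_def
  have hD : 0 < D := by
    rw [hD_def]
    have : b1 ^ 2 < b0 ^ 2 := by nlinarith
    linarith
  have hεa : ε * a = 2 := by rw [ha_def]; field_simp
  have hpow : ∀ b : ℝ, 0 ≤ b → (b ^ ε) ^ a = b ^ 2 := by
    intro b hb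
    rw [← Real.rpow_mul hb, hεa, show (2:ℝ) = ((2:ℕ):ℝ) by norm_num, Real.rpow_natCast]
  have hc0a : c0 ^ a = b0 ^ 2 := hpow b0 hb0.le
  have hc1a : c1 ^ a = b1 ^ 2 := hpow b1 hb1
  have ha1 : a + 1 ≠ 0 := by positivity
  have hc0a1 : c0 ^ (a + 1) = b0 ^ 2 * c0 := by
    rw [Real.rpow_add_one' (Real.rpow_nonneg hb0.le ε) ha1, hc0a]
  have hc1a1 : c1 ^ (a + 1) = b1 ^ 2 * c1 := by
    rw [Real.rpow_add_one' (Real.rpow_nonneg hb1 ε) ha1, hc1a]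
  have hkk : (0:ℝ) < (k:ℝ) ^ 2 - ((k:ℝ) - 1) ^ 2 := by nlinarith
  have hC : a / (a + 1)
            * (((k : ℝ) ^ 2 / ((k : ℝ) ^ 2 - ((k : ℝ) - 1) ^ 2)) * c0
              - (((k : ℝ) - 1) ^ 2 / ((k : ℝ) ^ 2 - ((k : ℝ) - 1) ^ 2)) * c1)
          = a / (a + 1) * (b0 ^ 2 * c0 - b1 ^ 2 * c1) / D := by
    have hDval : D = ((k:ℝ) ^ 2 - ((k:ℝ) - 1) ^ 2) / (K:ℝ) ^ 2 := by
      rw [hD_def, hb0_def, hb1_def, div_pow, div_pow]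
      ring
    have hb0sq : b0 ^ 2 = (k:ℝ) ^ 2 / (K:ℝ) ^ 2 := by rw [hb0_def, div_pow]
    have hb1sq : b1 ^ 2 = ((k:ℝ) - 1) ^ 2 / (K:ℝ) ^ 2 := by rw [hb1_def, div_pow]
    rw [hDval, hb0sq, hb1sq, eq_div_iff (by positivity : ((k:ℝ) ^ 2 - ((k:ℝ) - 1) ^ 2) / (K:ℝ) ^ 2 ≠ 0)]
    field_simp
  set Cx : ℝ := a / (a + 1)
            * (((k : ℝ) ^ 2 / ((k : ℝ) ^ 2 - ((k : ℝ) - 1) ^ 2)) * c0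
              - (((k : ℝ) - 1) ^ 2 / ((k : ℝ) ^ 2 - ((k : ℝ) - 1) ^ 2)) * c1) with hCx_def
  set CC : ℝ := a / D * (c0 ^ (a + 2) + c1 ^ (a + 2)) / (2 * (a + 2)) / ℓr ^ 2 with hCC_def
  have hCC0 : 0 ≤ CC := by rw [hCC_def]; positivity
  have hmain : ∀ φ : ℝ, 0 < φ → |F φ - Cx * φ / ℓr| ≤ CC * φ ^ 2 := by
    intro φ hφ
    set u : ℝ := φ / ℓr with hu_def
    have hu : 0 < u := by rw [hu_def]; positivity
    set P : ℝ := u ^ a with hP_def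
    have hP : 0 < P := Real.rpow_pos_of_pos hu a
    have hneg : u ^ (-a) = P⁻¹ := by rw [Real.rpow_neg hu.le, hP_def]
    have hua1 : u ^ (a + 1) = P * u := by rw [Real.rpow_add_one (ne_of_gt hu), hP_def]
    have hua2 : u ^ (a + 2) = P * u ^ 2 := by
      rw [show a + 2 = a + (2:ℕ) by norm_num, Real.rpow_add hu, Real.rpow_natCast, hP_def]
    have hma0 : (u * c0) ^ a = P * b0 ^ 2 := by
      rw [Real.mul_rpow hu.le hc0.le, hc0a, hP_def]
    have hma1 : (u * c0) ^ (a + 1) = P * u * (b0 ^ 2 * c0) := by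
      rw [Real.mul_rpow hu.le hc0.le, hc0a1, hua1]
    have hma2 : (u * c0) ^ (a + 2) = P * u ^ 2 * c0 ^ (a + 2) := by
      rw [Real.mul_rpow hu.le hc0.le, hua2]
    have hmb0 : (u * c1) ^ a = P * b1 ^ 2 := by
      rw [Real.mul_rpow hu.le hc1, hc1a, hP_def]
    have hmb1 : (u * c1) ^ (a + 1) = P * u * (b1 ^ 2 * c1) := by
      rw [Real.mul_rpow hu.le hc1, hc1a1, hua1]
    have hmb2 : (u * c1) ^ (a + 2) = P * u ^ 2 * c1 ^ (a + 2) := by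
      rw [Real.mul_rpow hu.le hc1, hua2]
    have hE0 := lowerGamma_expand a ha (u * c0) (by positivity)
    have hE1 := lowerGamma_expand a ha (u * c1) (by positivity)
    rw [Set.mem_Icc] at hE0 hE1
    set E0 : ℝ := lowerGamma a (u * c0) - ((u * c0) ^ a / a - (u * c0) ^ (a + 1) / (a + 1))
      with hE0_def
    set E1 : ℝ := lowerGamma a (u * c1) - ((u * c1) ^ a / a - (u * c1) ^ (a + 1) / (a + 1))
      with hE1_def
    have lg0 : lowerGamma a (u * c0) = P * b0 ^ 2 / a - P * u * (b0 ^ 2 * c0) / (a + 1) + E0 := by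
      rw [hE0_def, hma0, hma1]; ring
    have lg1 : lowerGamma a (u * c1) = P * b1 ^ 2 / a - P * u * (b1 ^ 2 * c1) / (a + 1) + E1 := by
      rw [hE1_def, hmb0, hmb1]; ring
    have hE0r : E0 ≤ P * u ^ 2 * c0 ^ (a + 2) / (2 * (a + 2)) := by
      rw [← hma2]; exact hE0.2
    have hE1r : E1 ≤ P * u ^ 2 * c1 ^ (a + 2) / (2 * (a + 2)) := by
      rw [← hmb2]; exact hE1.2
    have hPP : P⁻¹ * P = 1 := inv_mul_cancel₀ (ne_of_gt hP)
    have hDne' : b0 ^ 2 - b1 ^ 2 ≠ 0 := hD_def ▸ hD.ne'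
    have hterm : a / (a + 1) * (b0 ^ 2 * c0 - b1 ^ 2 * c1) / D * φ / ℓr
        = a / (a + 1) * (b0 ^ 2 * c0 - b1 ^ 2 * c1) / D * u := by
      rw [hu_def]; ring
    have key : F φ - Cx * φ / ℓr = -(a / D) * P⁻¹ * (E0 - E1) := by
      rw [hF φ hφ, hC, hterm, hD_def, lg0, lg1, hneg]
      field_simp
      ring
    rw [key]
    have habs : |(-(a / D)) * P⁻¹ * (E0 - E1)| = a / D * P⁻¹ * |E0 - E1| := by
      rw [abs_mul, abs_mul, abs_neg, abs_of_pos (by positivity : (0:ℝ) < a / D),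
        abs_of_pos (by positivity : (0:ℝ) < P⁻¹)]
    rw [habs]
    have h1 : |E0 - E1| ≤ P * u ^ 2 * c0 ^ (a + 2) / (2 * (a + 2))
        + P * u ^ 2 * c1 ^ (a + 2) / (2 * (a + 2)) := by
      calc |E0 - E1| ≤ |E0| + |E1| := abs_sub E0 E1
        _ = E0 + E1 := by rw [abs_of_nonneg hE0.1, abs_of_nonneg hE1.1]
        _ ≤ _ := add_le_add hE0r hE1r
    calc a / D * P⁻¹ * |E0 - E1|
        ≤ a / D * P⁻¹ * (P * u ^ 2 * c0 ^ (a + 2) / (2 * (a + 2))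
            + P * u ^ 2 * c1 ^ (a + 2) / (2 * (a + 2))) :=
          mul_le_mul_of_nonneg_left h1 (by positivity)
      _ = (P⁻¹ * P) * (a / D * u ^ 2 * (c0 ^ (a + 2) + c1 ^ (a + 2)) / (2 * (a + 2))) := by
          ring
      _ = a / D * u ^ 2 * (c0 ^ (a + 2) + c1 ^ (a + 2)) / (2 * (a + 2)) := by
          rw [hPP, one_mul]
      _ = CC * φ ^ 2 := by
          rw [hCC_def, hu_def, div_pow]
          field_simp
  rw [isLittleO_iff]
  intro c hc
  have hsmall : ∀ᶠ φ : ℝ in nhdsWithin 0 (Set.Ioi 0), |φ| < c / (CC + 1) := by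
    apply eventually_nhdsWithin_of_eventually_nhds
    have : (0:ℝ) < c / (CC + 1) := by positivity
    simpa using eventually_abs_sub_lt 0 this
  filter_upwards [hsmall, self_mem_nhdsWithin] with φ hφs (hφp : 0 < φ)
  have hb := hmain φ hφp
  have hφ' : φ ≤ c / (CC + 1) := le_of_lt (lt_of_abs_lt hφs)
  have h3 : CC * φ ≤ c := by
    calc CC * φ ≤ CC * (c / (CC + 1)) := mul_le_mul_of_nonneg_left hφ' hCC0
      _ ≤ c := by
        rw [mul_comm, div_mul_eq_mul_div, div_le_iff₀ (by positivity : (0:ℝ) < CC + 1)]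
        calc c * CC ≤ c * CC + c := by linarith
          _ = c * (CC + 1) := by ring
  have h4 : CC * φ ^ 2 ≤ c * φ := by
    have h5 := mul_le_mul_of_nonneg_right h3 hφp.le
    calc CC * φ ^ 2 = CC * φ * φ := by ring
      _ ≤ c * φ := h5
  rw [Real.norm_eq_abs, Real.norm_eq_abs, abs_of_pos hφp]
  calc |F φ - Cx * φ / ℓr| ≤ CC * φ ^ 2 := hb
    _ ≤ c * φ := h4
end
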